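/- For any nonnegative random variable Y and any r > 2, one has (1/2)·(E[Y²])^{1/2} ≤ ∫₀^∞ √(P(Y > t)) dt ≤ (r/(r-2))·(E[Y^r])^{1/r}. -/

import Mathlib

/-!
Write `g t = √P(Y > t)`. Since `g` is antitone, `t * g t ≤ ∫₀^t g ≤ ‖Y‖_{2,1}`, so the layer-cake
formula gives `E[Y²] = 2 ∫₀^∞ t P(Y > t) dt = 2 ∫₀^∞ g t * (t * g t) dt ≤ 2 ‖Y‖_{2,1}²`.
Conversely, Markov's inequality gives `g t ≤ min 1 ((‖Y‖_r / t) ^ (r / 2))`, and integrating this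
bound, split at `t = ‖Y‖_r`, gives `‖Y‖_r + ‖Y‖_r / (r / 2 - 1) = r / (r - 2) * ‖Y‖_r`.
-/

open MeasureTheory Set
open scoped ENNReal

theorem ofReal_mul_le_setLIntegral_Ioi_of_antitone {f : ℝ → ℝ≥0∞} (hf : Antitone f) (t : ℝ) :
    ENNReal.ofReal t * f t ≤ ∫⁻ s in Ioi 0, f s :=
  calc ENNReal.ofReal t * f t = ∫⁻ _ in Ioc 0 t, f t := by
        rw [setLIntegral_const, Real.volume_Ioc, sub_zero, mul_comm]
    _ ≤ ∫⁻ s in Ioc 0 t, f s := setLIntegral_mono' measurableSet_Ioc fun s hs => hf hs.2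
    _ ≤ ∫⁻ s in Ioi 0, f s := lintegral_mono_set Ioc_subset_Ioi_self

section Tail

variable {α : Type*} [MeasurableSpace α] {μ : Measure α} {Y : α → ℝ}

theorem lintegral_rpow_two_le_two_mul_sq_lintegral_sqrt_meas_lt (hY_nn : 0 ≤ᵐ[μ] Y)
    (hY : AEMeasurable Y μ) :
    ∫⁻ ω, ENNReal.ofReal (Y ω ^ (2 : ℝ)) ∂μ
      ≤ 2 * (∫⁻ t in Ioi 0, μ {ω | t < Y ω} ^ (1 / 2 : ℝ)) ^ 2 := by
  set h : ℝ → ℝ≥0∞ := fun t => μ {ω | t < Y ω} ^ (1 / 2 : ℝ)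
  set N := ∫⁻ t in Ioi 0, h t
  have h_anti : Antitone h := fun s t hst =>
    ENNReal.rpow_le_rpow (measure_mono fun ω hω => hst.trans_lt hω) (by norm_num)
  have h_sq : ∀ t, h t * h t = μ {ω | t < Y ω} := fun t => by
    rw [← ENNReal.rpow_add_of_nonneg _ _ (by norm_num) (by norm_num)]
    norm_num
  rw [lintegral_rpow_eq_lintegral_meas_lt_mul μ hY_nn hY two_pos]
  calc ENNReal.ofReal 2 * ∫⁻ t in Ioi 0, μ {ω | t < Y ω} * ENNReal.ofReal (t ^ ((2 : ℝ) - 1))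
      = 2 * ∫⁻ t in Ioi 0, h t * (ENNReal.ofReal t * h t) := by
        norm_num [← h_sq, mul_comm, mul_left_comm]
    _ ≤ 2 * ∫⁻ t in Ioi 0, h t * N := by
        gcongr with t
        exact ofReal_mul_le_setLIntegral_Ioi_of_antitone h_anti t
    _ = 2 * N ^ 2 := by rw [lintegral_mul_const _ h_anti.measurable, sq]

theorem integral_rpow_two_le_two_mul_sq_integral_sqrt_measureReal_lt [IsFiniteMeasure μ]
    (hY_nn : 0 ≤ᵐ[μ] Y) (hY : AEMeasurable Y μ)
    (h_int : IntegrableOn (fun t => √(μ.real {ω | t < Y ω})) (Ioi 0)) :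
    ∫ ω, Y ω ^ (2 : ℝ) ∂μ ≤ 2 * (∫ t in Ioi 0, √(μ.real {ω | t < Y ω})) ^ 2 := by
  have h_ofReal : ∀ t, ENNReal.ofReal √(μ.real {ω | t < Y ω}) = μ {ω | t < Y ω} ^ (1 / 2 : ℝ) :=
    fun t => by
      rw [measureReal_def, Real.sqrt_eq_rpow, ENNReal.toReal_rpow,
        ENNReal.ofReal_toReal (ENNReal.rpow_ne_top_of_nonneg (by norm_num) (measure_ne_top _ _))]
  have h_lint : ENNReal.ofReal (∫ t in Ioi 0, √(μ.real {ω | t < Y ω}))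
      = ∫⁻ t in Ioi 0, μ {ω | t < Y ω} ^ (1 / 2 : ℝ) := by
    rw [ofReal_integral_eq_lintegral_ofReal h_int (ae_of_all _ fun _ => Real.sqrt_nonneg _)]
    simp_rw [h_ofReal]
  rw [integral_eq_lintegral_of_nonneg_ae (hY_nn.mono fun ω h => Real.rpow_nonneg h 2)
    (hY.pow_const 2).aestronglyMeasurable]
  refine ENNReal.toReal_le_of_le_ofReal (by positivity) ?_
  rw [ENNReal.ofReal_mul zero_le_two,
    ENNReal.ofReal_pow (integral_nonneg fun _ => Real.sqrt_nonneg _), h_lint, ENNReal.ofReal_ofNat]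
  exact lintegral_rpow_two_le_two_mul_sq_lintegral_sqrt_meas_lt hY_nn hY

theorem measureReal_lt_le_div_rpow [IsFiniteMeasure μ] (hY_nn : 0 ≤ᵐ[μ] Y) {r : ℝ} (hr : 0 < r)
    (h_int : Integrable (fun ω => Y ω ^ r) μ) {t : ℝ} (ht : 0 < t) :
    μ.real {ω | t < Y ω} ≤ ((∫ ω, Y ω ^ r ∂μ) ^ (1 / r) / t) ^ r := by
  have h_nn : 0 ≤ᵐ[μ] fun ω => Y ω ^ r := hY_nn.mono fun ω h => Real.rpow_nonneg h r
  have h_markov := mul_meas_ge_le_integral_of_nonneg h_nn h_int (t ^ r)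
  calc μ.real {ω | t < Y ω} ≤ μ.real {ω | t ^ r ≤ Y ω ^ r} :=
        measureReal_mono fun ω hω => Real.rpow_le_rpow ht.le (le_of_lt hω) hr.le
    _ ≤ (∫ ω, Y ω ^ r ∂μ) / t ^ r := by
        rw [le_div_iff₀ (Real.rpow_pos_of_pos ht r)]
        linarith
    _ = ((∫ ω, Y ω ^ r ∂μ) ^ (1 / r) / t) ^ r := by
        rw [Real.div_rpow (Real.rpow_nonneg (integral_nonneg_of_ae h_nn) _) ht.le,
          ← Real.rpow_mul (integral_nonneg_of_ae h_nn), one_div_mul_cancel hr.ne', Real.rpow_one]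

theorem sqrt_measureReal_lt_le_div_rpow [IsFiniteMeasure μ] (hY_nn : 0 ≤ᵐ[μ] Y) {r : ℝ}
    (hr : 0 < r) (h_int : Integrable (fun ω => Y ω ^ r) μ) {t : ℝ} (ht : 0 < t) :
    √(μ.real {ω | t < Y ω}) ≤ ((∫ ω, Y ω ^ r ∂μ) ^ (1 / r) / t) ^ (r / 2) :=
  calc √(μ.real {ω | t < Y ω}) ≤ √(((∫ ω, Y ω ^ r ∂μ) ^ (1 / r) / t) ^ r) :=
        Real.sqrt_le_sqrt (measureReal_lt_le_div_rpow hY_nn hr h_int ht)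
    _ = ((∫ ω, Y ω ^ r ∂μ) ^ (1 / r) / t) ^ (r / 2) := by
        have h_nn : 0 ≤ (∫ ω, Y ω ^ r ∂μ) ^ (1 / r) / t :=
          div_nonneg (Real.rpow_nonneg (integral_nonneg_of_ae
            (hY_nn.mono fun ω h => Real.rpow_nonneg h r)) _) ht.le
        rw [Real.sqrt_eq_rpow, ← Real.rpow_mul h_nn]
        ring_nf

end Tail

section PowerTail

variable {f : ℝ → ℝ} {A q : ℝ}

theorem div_rpow_eq_rpow_mul_rpow_neg (hA : 0 ≤ A) {t : ℝ} (ht : 0 < t) :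
    (A / t) ^ q = A ^ q * t ^ (-q) := by
  rw [Real.div_rpow hA ht.le, Real.rpow_neg ht.le, div_eq_mul_inv]

theorem integrableOn_Ioi_of_le_div_rpow (hf : Measurable f) (hf_nn : ∀ t, 0 ≤ f t) (hA : 0 ≤ A)
    (hq : 1 < q) (hf_le : ∀ t > 0, f t ≤ (A / t) ^ q) {c : ℝ} (hc : 0 < c) :
    IntegrableOn f (Ioi c) := by
  refine Integrable.mono' ((integrableOn_Ioi_rpow_of_lt (neg_lt_neg hq) hc).const_mul (A ^ q))
    hf.aestronglyMeasurable.restrict ?_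
  filter_upwards [ae_restrict_mem measurableSet_Ioi] with t ht
  rw [Real.norm_of_nonneg (hf_nn t), ← div_rpow_eq_rpow_mul_rpow_neg hA (hc.trans ht)]
  exact hf_le t (hc.trans ht)

theorem integrableOn_Ioi_zero_of_le_one_of_le_div_rpow (hf : Measurable f)
    (hf_nn : ∀ t, 0 ≤ f t) (hf_le_one : ∀ t, f t ≤ 1) (hA : 0 ≤ A) (hq : 1 < q)
    (hf_le : ∀ t > 0, f t ≤ (A / t) ^ q) :
    IntegrableOn f (Ioi 0) := by
  have h_Ioc : IntegrableOn f (Ioc 0 1) :=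
    .of_bound measure_Ioc_lt_top hf.aestronglyMeasurable.restrict 1
      (ae_of_all _ fun t => by rw [Real.norm_of_nonneg (hf_nn t)]; exact hf_le_one t)
  rw [← Ioc_union_Ioi_eq_Ioi zero_le_one]
  exact h_Ioc.union (integrableOn_Ioi_of_le_div_rpow hf hf_nn hA hq hf_le one_pos)

theorem setIntegral_Ioi_zero_le_of_le_one_of_le_div_rpow (hf : Measurable f)
    (hf_nn : ∀ t, 0 ≤ f t) (hf_le_one : ∀ t, f t ≤ 1) (hA : 0 ≤ A) (hq : 1 < q)
    (hf_le : ∀ t > 0, f t ≤ (A / t) ^ q) :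
    ∫ t in Ioi 0, f t ≤ q / (q - 1) * A := by
  rcases hA.eq_or_lt with rfl | hA_pos
  · rw [mul_zero]
    refine setIntegral_nonpos measurableSet_Ioi fun t ht => ?_
    simpa [Real.zero_rpow (by linarith : q ≠ 0)] using hf_le t ht
  have h_int := integrableOn_Ioi_zero_of_le_one_of_le_div_rpow hf hf_nn hf_le_one hA hq hf_le
  have h_near : ∫ t in Ioc 0 A, f t ≤ A :=
    calc ∫ t in Ioc 0 A, f t ≤ ∫ _ in Ioc 0 A, (1 : ℝ) :=
          setIntegral_mono_on (h_int.mono_set Ioc_subset_Ioi_self)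
            (integrableOn_const measure_Ioc_lt_top.ne) measurableSet_Ioc fun t _ => hf_le_one t
      _ = A := by simp [hA]
  have h_far : ∫ t in Ioi A, f t ≤ A / (q - 1) :=
    calc ∫ t in Ioi A, f t ≤ ∫ t in Ioi A, A ^ q * t ^ (-q) :=
          setIntegral_mono_on (h_int.mono_set (Ioi_subset_Ioi hA))
            ((integrableOn_Ioi_rpow_of_lt (neg_lt_neg hq) hA_pos).const_mul _) measurableSet_Ioi
            fun t ht => div_rpow_eq_rpow_mul_rpow_neg hA (hA_pos.trans ht) ▸
              hf_le t (hA_pos.trans ht)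
      _ = A / (q - 1) := by
          have h_pow : A ^ q * A ^ (-q + 1) = A := by rw [← Real.rpow_add hA_pos]; simp
          rw [integral_const_mul, integral_Ioi_rpow_of_lt (neg_lt_neg hq) hA_pos, neg_div,
            mul_neg, mul_div_assoc', h_pow, show -q + 1 = -(q - 1) by ring, div_neg, neg_neg]
  rw [← Ioc_union_Ioi_eq_Ioi hA, setIntegral_union (Ioc_disjoint_Ioi le_rfl) measurableSet_Ioi
    (h_int.mono_set Ioc_subset_Ioi_self) (h_int.mono_set (Ioi_subset_Ioi hA))]
  calc (∫ t in Ioc 0 A, f t) + ∫ t in Ioi A, f t ≤ A + A / (q - 1) := add_le_add h_near h_far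
    _ = q / (q - 1) * A := by field_simp [(sub_pos.2 hq).ne']; ring

end PowerTail

/-- For a nonnegative random variable `Y` with finite `r`-th moment, `r > 2`:
`(1/2)‖Y‖₂ ≤ ‖Y‖_{2,1} ≤ (r/(r-2))‖Y‖_r`, where `‖Y‖_{2,1} = ∫₀^∞ √(P(Y > t)) dt`. -/
theorem stmt0 {Ω : Type*} [MeasurableSpace Ω] (μ : Measure Ω) [IsProbabilityMeasure μ]
    (Y : Ω → ℝ) (hY : Measurable Y) (hpos : ∀ ω, 0 ≤ Y ω) (r : ℝ) (hr : 2 < r)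
    (hint : Integrable (fun ω => Y ω ^ r) μ) :
    (1 / 2) * (∫ ω, Y ω ^ (2 : ℝ) ∂μ) ^ ((1 : ℝ) / 2)
        ≤ ∫ t in Ioi (0 : ℝ), Real.sqrt ((μ {ω | Y ω > t}).toReal)
      ∧ ∫ t in Ioi (0 : ℝ), Real.sqrt ((μ {ω | Y ω > t}).toReal)
        ≤ (r / (r - 2)) * (∫ ω, Y ω ^ r ∂μ) ^ (1 / r) := by
  show _ ≤ ∫ t in Ioi 0, √(μ.real {ω | t < Y ω}) ∧ ∫ t in Ioi 0, √(μ.real {ω | t < Y ω}) ≤ _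
  set A := (∫ ω, Y ω ^ r ∂μ) ^ (1 / r)
  have hY_nn : 0 ≤ᵐ[μ] Y := ae_of_all _ hpos
  have hA : 0 ≤ A := Real.rpow_nonneg (integral_nonneg fun ω => Real.rpow_nonneg (hpos ω) r) _
  have hq : 1 < r / 2 := by linarith
  have h_anti : Antitone fun t => √(μ.real {ω | t < Y ω}) := fun s t hst =>
    Real.sqrt_le_sqrt (measureReal_mono fun ω hω => hst.trans_lt hω)
  have h_le_one : ∀ t, √(μ.real {ω | t < Y ω}) ≤ 1 := fun t =>
    Real.sqrt_le_one.mpr measureReal_le_one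
  have h_tail : ∀ t > 0, √(μ.real {ω | t < Y ω}) ≤ (A / t) ^ (r / 2) := fun t ht =>
    sqrt_measureReal_lt_le_div_rpow hY_nn (by linarith) hint ht
  have h_int := integrableOn_Ioi_zero_of_le_one_of_le_div_rpow h_anti.measurable
    (fun _ => Real.sqrt_nonneg _) h_le_one hA hq h_tail
  refine ⟨?_, ?_⟩
  · have h_sq := integral_rpow_two_le_two_mul_sq_integral_sqrt_measureReal_lt hY_nn
      hY.aemeasurable h_int
    have h_nn : 0 ≤ ∫ t in Ioi 0, √(μ.real {ω | t < Y ω}) :=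
      setIntegral_nonneg measurableSet_Ioi fun _ _ => Real.sqrt_nonneg _
    have h_sqrt : √(∫ ω, Y ω ^ (2 : ℝ) ∂μ) ≤ 2 * ∫ t in Ioi 0, √(μ.real {ω | t < Y ω}) :=
      Real.sqrt_le_iff.mpr ⟨by positivity, h_sq.trans (by nlinarith)⟩
    rw [← Real.sqrt_eq_rpow]
    linarith
  · calc ∫ t in Ioi 0, √(μ.real {ω | t < Y ω}) ≤ r / 2 / (r / 2 - 1) * A :=
          setIntegral_Ioi_zero_le_of_le_one_of_le_div_rpow h_anti.measurable
            (fun _ => Real.sqrt_nonneg _) h_le_one hA hq h_tail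
      _ = r / (r - 2) * A := by
          congr 1
          field_simp
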